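/- arXiv:1903.04266 — 3 statements merged into one kernel-verified Lean document; each statement's English description precedes it below -/
import Mathlib

section
/- Let k be a field that is not algebraic over a finite subfield, and let R be a k-algebra. If R has at least one nonartinian primitive subquotient, i.e., there exist a k-subalgebra A of R and a two-sided ideal I of A such that the quotient ring A/I is left primitive and not left artinian, then R contains a free noncyclic subsemigroup. -/
universe u v

/-- A ring (or semigroup) `R` contains a free noncyclic subsemigroup if there
are `x y : R` such that the multiplicative subsemigroup they generate is free
on `{x, y}`, i.e. the canonical semigroup homomorphism from the free semigroup
on two generators sending the generators to `x` and `y` is injective. -/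
def HasFreeNoncyclicSubsemigroup (R : Type*) [Semigroup R] : Prop :=
  ∃ x y : R, Function.Injective
    ⇑(FreeSemigroup.lift (fun b : Bool => if b then x else y))

/-- A field `k` is not algebraic over a finite subfield if there is no finite
subfield `F` of `k` such that every element of `k` is algebraic over `F`. -/
def NotAlgebraicOverFiniteSubfield (k : Type*) [Field k] : Prop :=
  ¬ ∃ F : Subfield k, Finite F ∧ ∀ x : k, IsAlgebraic F x

/-- A ring is left primitive if it has a faithful simple left module. -/
def IsLeftPrimitiveRing (R : Type u) [Ring R] : Prop :=
  ∃ (M : Type u) (_ : AddCommGroup M) (_ : Module R M),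
    IsSimpleModule R M ∧ FaithfulSMul R M

/-!
Let `M` be a faithful simple module over the primitive subquotient `Q`. If some `m₀ ≠ 0` has the
whole of `M` as its orbit under `End_Q M`, then `q ↦ q • m₀` embeds `Q` into the artinian module
`M`. Otherwise there are `m₁ ≠ 0` and `m₂` outside the orbit of `m₁`, and then `m₁, m₂` can be sent
anywhere simultaneously by one element of `Q`. Pick `x, y ∈ Q` with `x m₁ = y m₁ = t m₁`,
`x m₂ = m₁ + m₂` and `y m₂ = m₂`: a word `w` in `x, y` sends `m₁ + m₂` to `v(w) m₁ + m₂`, where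
`v(w)` is the base-`t` numeral with the letters of `w` as digits followed by a digit `1`. Distinct
words have distinct numerals for `t = 2` in characteristic zero and for `t` transcendental over the
prime field in characteristic `p`; such a `t` exists because `k` is not algebraic over a finite
subfield. Freeness lifts from `Q` to the subalgebra and from there to `R`.
-/

open Function

section Transfer

variable {S T F : Type*} [Semigroup S] [Semigroup T] [FunLike F S T] [MulHomClass F S T]

theorem FreeSemigroup.lift_ite_map (f : F) (x y : S) (w : FreeSemigroup Bool) :
    lift (fun b : Bool => if b then f x else f y) w = f (lift (fun b => if b then x else y) w) :=
  DFunLike.congr_fun (FreeSemigroup.hom_ext (f := lift fun b : Bool => if b then f x else f y)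
    (g := (f : S →ₙ* T).comp (lift fun b => if b then x else y))
    (funext fun b => by cases b <;> rfl)) w

theorem HasFreeNoncyclicSubsemigroup.map_of_injective (f : F) (hf : Injective f)
    (h : HasFreeNoncyclicSubsemigroup S) : HasFreeNoncyclicSubsemigroup T := by
  obtain ⟨x, y, hxy⟩ := h
  exact ⟨f x, f y, fun w w' hw => hxy (hf (by simpa only [FreeSemigroup.lift_ite_map] using hw))⟩

theorem HasFreeNoncyclicSubsemigroup.of_surjective (f : F) (hf : Surjective f)
    (h : HasFreeNoncyclicSubsemigroup T) : HasFreeNoncyclicSubsemigroup S := by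
  obtain ⟨x, y, hxy⟩ := h
  obtain ⟨x, rfl⟩ := hf x
  obtain ⟨y, rfl⟩ := hf y
  exact ⟨x, y, fun w w' hw => hxy (by simp only [FreeSemigroup.lift_ite_map, hw])⟩

end Transfer

section BitsValue

variable {S T : Type*} [Semiring S] [Semiring T]

/-- The final digit `1` makes the value see the length of `L`: without it `[true]` and
`[true, false]` would have the same value. -/
def bitsValue (t : S) (L : List Bool) : S :=
  L.foldr (fun b a => (if b then 1 else 0) + t * a) 1

@[simp] theorem bitsValue_nil (t : S) : bitsValue t [] = 1 := rfl

@[simp] theorem bitsValue_cons (t : S) (b : Bool) (L : List Bool) :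
    bitsValue t (b :: L) = (if b then 1 else 0) + t * bitsValue t L := rfl

theorem map_bitsValue (f : S →+* T) (t : S) (L : List Bool) :
    f (bitsValue t L) = bitsValue (f t) L := by
  induction L with
  | nil => simp
  | cons b L ih => cases b <;> simp [ih]

def SeparatesBits (s : S) : Prop :=
  ∀ (b b' : Bool) (u u' : S),
    (if b then 1 else 0) + s * u = (if b' then 1 else 0) + s * u' → b = b' ∧ u = u'

theorem SeparatesBits.bitsValue_ne_zero {s : S} (hs : SeparatesBits s) (L : List Bool) :
    bitsValue s L ≠ 0 := by
  induction L with
  | nil =>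
    intro h
    simpa using hs true false 0 0 (by simpa using h)
  | cons b L ih =>
    intro h
    exact ih (hs b false _ 0 (by simpa using h)).2

theorem SeparatesBits.bitsValue_injective {s : S} (hs : SeparatesBits s) :
    Injective (bitsValue s) := by
  intro L L' h
  induction L generalizing L' with
  | nil =>
    cases L' with
    | nil => rfl
    | cons b' L' =>
      exact absurd (hs true b' 0 _ (by simpa using h)).2.symm (hs.bitsValue_ne_zero L')
  | cons b L ih =>
    cases L' with
    | nil =>
      exact absurd (hs b true _ 0 (by simpa using h)).2 (hs.bitsValue_ne_zero L)
    | cons b' L' =>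
      obtain ⟨rfl, hL⟩ := hs b b' _ _ h
      rw [ih hL]

theorem SeparatesBits.bitsValue_map_injective {s : S} (hs : SeparatesBits s) {f : S →+* T}
    (hf : Injective f) : Injective (bitsValue (f s)) := by
  intro L L' h
  apply hs.bitsValue_injective
  apply hf
  rwa [map_bitsValue, map_bitsValue]

theorem Int.separatesBits_two : SeparatesBits (2 : ℤ) := by
  intro b b' u u' h
  cases b <;> cases b' <;> simp at h ⊢ <;> omega

theorem Polynomial.separatesBits_X {R : Type*} [Ring R] [Nontrivial R] :
    SeparatesBits (Polynomial.X : Polynomial R) := by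
  intro b b' u u' h
  have hb : b = b' := by
    have h0 := congrArg (Polynomial.coeff · 0) h
    cases b <;> cases b' <;> simp at h0 ⊢
  subst hb
  exact ⟨rfl, Polynomial.isRegular_X.left (add_left_cancel h)⟩

theorem exists_bitsValue_injective {k : Type*} [Field k] (hk : NotAlgebraicOverFiniteSubfield k) :
    ∃ t : k, Injective (bitsValue t) := by
  rcases CharP.char_is_prime_or_zero k (ringChar k) with hp | h0
  · have := Fact.mk hp
    let F := (ZMod.castHom (dvd_refl (ringChar k)) k).fieldRange
    have hF : Finite F := by
      have : (F : Set k).Finite := by rw [RingHom.coe_fieldRange]; exact Set.finite_range _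
      exact this.to_subtype
    obtain ⟨t, ht⟩ : ∃ t : k, Transcendental F t := by
      by_contra! h
      exact hk ⟨F, hF, fun t => not_not.mp (h t)⟩
    refine ⟨Polynomial.aeval t (Polynomial.X : Polynomial F), ?_⟩
    exact Polynomial.separatesBits_X.bitsValue_map_injective
      (f := (Polynomial.aeval t).toRingHom) (by exact transcendental_iff_injective.mp ht)
  · have : CharZero k := (CharP.charP_zero_iff_charZero k).mp (h0 ▸ ringChar.charP k)
    exact ⟨_, Int.separatesBits_two.bitsValue_map_injective (f := Int.castRingHom k)
      Int.cast_injective⟩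

end BitsValue

namespace IsSimpleModule

variable {Q M : Type*} [Ring Q] [AddCommGroup M] [Module Q M] [IsSimpleModule Q M] {m₁ m₂ : M}

theorem exists_end_apply_eq (hm₁ : m₁ ≠ 0) (h : ∀ q : Q, q • m₁ = 0 → q • m₂ = 0) :
    ∃ d : Module.End Q M, d m₁ = m₂ := by
  let f := LinearMap.toSpanSingleton Q M m₁
  let e := f.quotKerEquivOfSurjective (toSpanSingleton_surjective Q hm₁)
  have hker : f.ker ≤ (LinearMap.toSpanSingleton Q M m₂).ker := fun q hq => by
    simpa using h q (by simpa [f] using hq)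
  refine ⟨f.ker.liftQ _ hker ∘ₗ e.symm, ?_⟩
  have he : e.symm m₁ = Submodule.Quotient.mk 1 := by
    rw [e.symm_apply_eq]
    simp [e, f]
  rw [LinearMap.comp_apply, LinearEquiv.coe_coe, he, Submodule.liftQ_apply,
    LinearMap.toSpanSingleton_apply, one_smul]

theorem exists_smul_eq_zero_and_smul_ne_zero (hm₁ : m₁ ≠ 0)
    (h : ∀ d : Module.End Q M, d m₁ ≠ m₂) : ∃ q : Q, q • m₁ = 0 ∧ q • m₂ ≠ 0 := by
  by_contra! h'
  obtain ⟨d, hd⟩ := exists_end_apply_eq hm₁ h'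
  exact h d hd

theorem end_apply_ne_of_end_apply_ne (hm₁ : m₁ ≠ 0) (h : ∀ d : Module.End Q M, d m₁ ≠ m₂)
    (d : Module.End Q M) : d m₂ ≠ m₁ := by
  intro hd
  have hd0 : d ≠ 0 := by
    rintro rfl
    exact hm₁ hd.symm
  let e := LinearEquiv.ofBijective d (LinearMap.bijective_of_ne_zero hd0)
  exact h e.symm (by rw [← hd]; exact e.symm_apply_apply m₂)

theorem exists_smul_eq_and_smul_eq (hm₁ : m₁ ≠ 0) (h : ∀ d : Module.End Q M, d m₁ ≠ m₂)
    (u₁ u₂ : M) : ∃ q : Q, q • m₁ = u₁ ∧ q • m₂ = u₂ := by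
  have hm₂ : m₂ ≠ 0 := by
    rintro rfl
    exact h 0 rfl
  obtain ⟨q₀, hq₀₁, hq₀₂⟩ := exists_smul_eq_zero_and_smul_ne_zero hm₁ h
  obtain ⟨q₁, hq₁₂, hq₁₁⟩ :=
    exists_smul_eq_zero_and_smul_ne_zero hm₂ (end_apply_ne_of_end_apply_ne hm₁ h)
  obtain ⟨r₁, hr₁⟩ := toSpanSingleton_surjective Q hq₁₁ u₁
  obtain ⟨r₂, hr₂⟩ := toSpanSingleton_surjective Q hq₀₂ u₂
  simp only [LinearMap.toSpanSingleton_apply] at hr₁ hr₂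
  exact ⟨r₁ * q₁ + r₂ * q₀, by simp [add_smul, mul_smul, hq₀₁, hr₁],
    by simp [add_smul, mul_smul, hq₁₂, hr₂]⟩

theorem isArtinianRing_of_end_apply_surjective [FaithfulSMul Q M] {m₀ : M}
    (h : ∀ m : M, ∃ d : Module.End Q M, d m₀ = m) : IsArtinianRing Q := by
  have hinj : Injective (LinearMap.toSpanSingleton Q M m₀) := by
    rw [← LinearMap.ker_eq_bot, LinearMap.ker_eq_bot']
    intro q hq
    apply FaithfulSMul.eq_of_smul_eq_smul (α := M)
    intro m
    obtain ⟨d, rfl⟩ := h m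
    rw [← d.map_smul, ← d.map_smul]
    simp_all
  exact isArtinian_of_injective _ hinj

end IsSimpleModule

theorem FreeSemigroup.lift_smul_add {k Q M : Type*} [CommSemiring k] [Semiring Q] [Algebra k Q]
    [AddCommMonoid M] [Module Q M] [Module k M] [IsScalarTower k Q M] {g : Bool → Q} {t : k}
    {m₁ m₂ : M} (h₁ : ∀ b, g b • m₁ = t • m₁)
    (h₂ : ∀ b, g b • m₂ = (if b then 1 else 0 : k) • m₁ + m₂) (w : FreeSemigroup Bool) :
    FreeSemigroup.lift g w • (m₁ + m₂) = bitsValue t (w.head :: w.tail) • m₁ + m₂ := by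
  induction w using FreeSemigroup.recOnMul with
  | ih1 b =>
    rw [FreeSemigroup.lift_of, smul_add, h₁, h₂]
    simp only [FreeSemigroup.of, bitsValue_cons, bitsValue_nil, mul_one, add_smul]
    abel
  | ih2 b w _ ih =>
    rw [FreeSemigroup.lift_of_mul, mul_smul, ih, smul_add, smul_comm, h₁, h₂, smul_smul]
    show _ = ((if b then 1 else 0) + t * bitsValue t (w.head :: w.tail)) • m₁ + m₂
    rw [add_smul, mul_comm t]
    abel

theorem HasFreeNoncyclicSubsemigroup.of_isLeftPrimitiveRing {k Q : Type*} [Field k] [Ring Q]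
    [Algebra k Q] {t : k} (ht : Injective (bitsValue t)) (hprim : IsLeftPrimitiveRing Q)
    (hart : ¬ IsArtinianRing Q) : HasFreeNoncyclicSubsemigroup Q := by
  obtain ⟨M, _, _, _, _⟩ := hprim
  let _ : Module k M := Module.compHom M (algebraMap k Q)
  have : IsScalarTower k Q M := IsScalarTower.of_compHom k Q M
  obtain ⟨m₁, m₂, hm₁, hm₂⟩ : ∃ m₁ m₂ : M, m₁ ≠ 0 ∧ ∀ d : Module.End Q M, d m₁ ≠ m₂ := by
    by_contra! h
    have := IsSimpleModule.nontrivial Q M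
    obtain ⟨m₀, hm₀⟩ := exists_ne (0 : M)
    exact hart (IsSimpleModule.isArtinianRing_of_end_apply_surjective (h m₀ · hm₀))
  obtain ⟨x, hx₁, hx₂⟩ := IsSimpleModule.exists_smul_eq_and_smul_eq hm₁ hm₂ (t • m₁) (m₁ + m₂)
  obtain ⟨y, hy₁, hy₂⟩ := IsSimpleModule.exists_smul_eq_and_smul_eq hm₁ hm₂ (t • m₁) m₂
  have hxy := FreeSemigroup.lift_smul_add (g := fun b => if b then x else y) (t := t)
    (m₁ := m₁) (m₂ := m₂)
    (fun b => by cases b <;> assumption) (fun b => by cases b <;> simp [hx₂, hy₂])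
  refine ⟨x, y, fun w w' hw => ?_⟩
  have h := congrArg (· • (m₁ + m₂)) hw
  simp only [hxy] at h
  obtain ⟨hhead, htail⟩ := List.cons.inj (ht (smul_left_injective k hm₁ (add_right_cancel h)))
  exact FreeSemigroup.ext hhead htail

/-- If `k` is a field not algebraic over a finite subfield and the `k`-algebra
`R` has a subquotient (a quotient of a `k`-subalgebra by a two-sided ideal)
which is left primitive and not left artinian, then `R` contains a free
noncyclic subsemigroup. -/
theorem free_subsemigroup_of_nonartinian_primitive_subquotient
    {k : Type v} [Field k] (hk : NotAlgebraicOverFiniteSubfield k)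
    {R : Type u} [Ring R] [Algebra k R]
    (h : ∃ (A : Subalgebra k R) (I : TwoSidedIdeal A),
      IsLeftPrimitiveRing I.ringCon.Quotient ∧ ¬ IsArtinianRing I.ringCon.Quotient) :
    HasFreeNoncyclicSubsemigroup R := by
  obtain ⟨A, I, hprim, hart⟩ := h
  obtain ⟨t, ht⟩ := exists_bitsValue_injective hk
  exact ((HasFreeNoncyclicSubsemigroup.of_isLeftPrimitiveRing ht hprim hart).of_surjective
    I.ringCon.mk' I.ringCon.mk'_surjective).map_of_injective A.val Subtype.val_injective
end

section
/- Let k be a field that is not algebraic over a finite subfield. The following two statements are equivalent: (i) every noncommutative division algebra over k contains a free noncyclic subsemigroup; (ii) every k-algebra that is noncommutative modulo its Jacobson radical contains a free noncyclic subsemigroup. -/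
universe u v

/-- `r` lies in the Jacobson radical of the ring `R`: it annihilates every
simple left `R`-module. -/
def InJacobsonRadical {R : Type u} [Ring R] (r : R) : Prop :=
  ∀ (M : Type u) (_ : AddCommGroup M) (_ : Module R M),
    IsSimpleModule R M → ∀ m : M, r • m = 0

/-!
Let `M` be a simple `R`-module on which `x * y - y * x` acts nontrivially, and `D = End_R M`.
If `M` is one-dimensional over `D`, the Jacobson density theorem makes `R → End_D M` surjective
onto a division ring (Schur), noncommutative because of `x * y - y * x`; free generators found
there by (i) lift back to `R`. Otherwise pick `D`-independent `u, v`: by density some `x, y ∈ R`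
act on `(u, v)` as the matrices `[[t, 1], [0, 1]]` and `[[t, 0], [0, 1]]`, so a word
`b₀ ⋯ bₙ₋₁` acts as `[[tⁿ, ∑ bᵢ tⁱ], [0, 1]]`. Distinct words give distinct matrices as soon as
`t` is a root of no nonzero polynomial with coefficients in `{-1, 0, 1}`; such a `t` is `2` in
characteristic zero, and in characteristic `p` any element transcendental over `𝔽ₚ`, which
exists because `k` is not algebraic over a finite subfield.
Conversely, a division ring is a simple module over itself, so its Jacobson radical is zero.
-/

open Polynomial

def NoSignedDigitRoot {A : Type*} [Ring A] (t : A) : Prop :=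
  ∀ p : ℤ[X], (∀ n, |p.coeff n| ≤ 1) → aeval t p = 0 → p = 0

theorem Polynomial.eq_zero_of_eval_two_eq_zero_of_abs_coeff_le_one {p : ℤ[X]}
    (hp : ∀ n, |p.coeff n| ≤ 1) (h : p.eval 2 = 0) : p = 0 := by
  -- `q(2) ≡ q₀ (mod 2)` forces `q₀ = 0`, and then `q(2) = 2 · (q / X)(2)`.
  have step : ∀ q : ℤ[X], (∀ n, |q.coeff n| ≤ 1) → q.eval 2 = 0 →
      q.coeff 0 = 0 ∧ q.divX.eval 2 = 0 := by
    intro q hq hq2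
    have hsplit : q.divX.eval 2 * 2 + q.coeff 0 = 0 := by
      simpa [hq2] using congr_arg (eval 2) (divX_mul_X_add q)
    have := abs_le.mp (hq 0)
    have h0 : q.coeff 0 = 0 := by omega
    exact ⟨h0, by rw [h0] at hsplit; omega⟩
  ext n
  induction n generalizing p with
  | zero => exact (step p hp h).1
  | succ n ih =>
    rw [coeff_zero, ← coeff_divX]
    exact ih (fun m => by rw [coeff_divX]; exact hp _) (step p hp h).2

theorem noSignedDigitRoot_two {A : Type*} [Ring A] [CharZero A] : NoSignedDigitRoot (2 : A) := by
  intro p hp h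
  refine eq_zero_of_eval_two_eq_zero_of_abs_coeff_le_one hp ?_
  have : aeval (algebraMap ℤ A 2) p = algebraMap ℤ A (p.eval 2) :=
    aeval_algebraMap_apply_eq_algebraMap_eval 2 p
  rw [map_ofNat, h] at this
  simpa using this.symm

theorem noSignedDigitRoot_of_transcendental {A B : Type*} [CommRing A] [Nontrivial A] [Ring B]
    [Algebra A B] {t : B} (ht : Transcendental A t) : NoSignedDigitRoot t := by
  intro p hp h
  by_contra hp0
  obtain ⟨n, hn⟩ : ∃ n, p.coeff n ≠ 0 := by
    by_contra! h'
    exact hp0 (Polynomial.ext h')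
  apply ht
  refine ⟨p.map (algebraMap ℤ A), fun hmap => ?_, by rw [aeval_map_algebraMap, h]⟩
  have hc := congr_arg (coeff · n) hmap
  simp only [coeff_map, coeff_zero] at hc hn
  rcases abs_le.mp (hp n) with ⟨h1, h2⟩
  obtain hc1 | hc1 : p.coeff n = -1 ∨ p.coeff n = 1 := by omega
  all_goals rw [hc1] at hc; simp at hc

theorem NoSignedDigitRoot.pow_injective {A : Type*} [Ring A] {t : A} (ht : NoSignedDigitRoot t) :
    Function.Injective (t ^ · : ℕ → A) := by
  intro m n hmn
  by_contra hne
  have hp := ht (X ^ m - X ^ n) (fun i => by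
    simp only [coeff_sub, coeff_X_pow]; split_ifs <;> simp)
    (by simpa [sub_eq_zero] using hmn)
  simpa [hne] using congr_arg (coeff · m) hp

theorem exists_noSignedDigitRoot {k : Type*} [Field k] (hk : NotAlgebraicOverFiniteSubfield k) :
    ∃ t : k, NoSignedDigitRoot t := by
  obtain ⟨p, hchar⟩ := CharP.exists k
  rcases CharP.char_is_prime_or_zero k p with hp | rfl
  · have : Fact p.Prime := ⟨hp⟩
    let F := (ZMod.castHom (dvd_refl p) k).fieldRange
    have : Finite F := Set.finite_range _ |>.to_subtype
    obtain ⟨t, ht⟩ : ∃ t : k, ¬ IsAlgebraic F t := by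
      by_contra! h
      exact hk ⟨F, ‹_›, h⟩
    exact ⟨t, noSignedDigitRoot_of_transcendental ht⟩
  · have : CharZero k := CharP.charP_to_charZero k
    exact ⟨2, noSignedDigitRoot_two⟩

namespace FreeSemigroup

variable {α : Type*}

def toList (w : FreeSemigroup α) : List α := w.head :: w.tail

theorem toList_injective : Function.Injective (toList : FreeSemigroup α → List α) := by
  rintro ⟨a, l⟩ ⟨b, m⟩ h
  obtain ⟨rfl, rfl⟩ := List.cons.inj h
  rfl

theorem toList_of (a : α) : (of a).toList = [a] := rfl

theorem toList_of_mul (a : α) (w : FreeSemigroup α) : (of a * w).toList = a :: w.toList := rfl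

theorem length_toList (w : FreeSemigroup α) : w.toList.length = w.length := rfl

end FreeSemigroup

noncomputable def digitPoly : List Bool → ℤ[X]
  | [] => 0
  | b :: l => C (b.toNat : ℤ) + X * digitPoly l

theorem coeff_digitPoly_nonneg_and_le_one (l : List Bool) (n : ℕ) :
    0 ≤ (digitPoly l).coeff n ∧ (digitPoly l).coeff n ≤ 1 := by
  induction l generalizing n with
  | nil => simp [digitPoly]
  | cons b l ih =>
    cases n with
    | zero => cases b <;> simp [digitPoly]
    | succ n => simpa [digitPoly, coeff_C] using ih n

theorem eq_of_digitPoly_eq {l₁ l₂ : List Bool} (hlen : l₁.length = l₂.length)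
    (h : digitPoly l₁ = digitPoly l₂) : l₁ = l₂ := by
  induction l₁ generalizing l₂ with
  | nil => exact (List.length_eq_zero_iff.mp hlen.symm).symm
  | cons b₁ l₁ ih =>
    obtain _ | ⟨b₂, l₂⟩ := l₂
    · simp at hlen
    have hb : b₁ = b₂ := by
      have h0 : (b₁.toNat : ℤ) = b₂.toNat := by simpa [digitPoly] using congr_arg (coeff · 0) h
      cases b₁ <;> cases b₂ <;> simp at h0 ⊢
    have hl : digitPoly l₁ = digitPoly l₂ := by
      simpa [digitPoly, hb, X_mul, mul_left_injective₀ X_ne_zero |>.eq_iff] using h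
    rw [hb, ih (by simpa using hlen) hl]

theorem NoSignedDigitRoot.eq_of_aeval_digitPoly_eq {A : Type*} [Ring A] {t : A}
    (ht : NoSignedDigitRoot t) {l₁ l₂ : List Bool} (hlen : l₁.length = l₂.length)
    (h : aeval t (digitPoly l₁) = aeval t (digitPoly l₂)) : l₁ = l₂ := by
  refine eq_of_digitPoly_eq hlen <|
    sub_eq_zero.mp (ht _ (fun n => ?_) (by rw [map_sub, h, sub_self]))
  have h₁ := coeff_digitPoly_nonneg_and_le_one l₁ n
  have h₂ := coeff_digitPoly_nonneg_and_le_one l₂ n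
  rw [coeff_sub, abs_le]
  omega

section Action

variable {k R M : Type*} [Field k] [Ring R] [Algebra k R] [AddCommGroup M] [Module R M]

theorem smul_algebraMap_smul_comm (r : R) (s : k) (m : M) :
    r • algebraMap k R s • m = algebraMap k R s • r • m := by
  rw [← mul_smul, ← mul_smul, Algebra.commutes]

theorem algebraMap_smul_left_injective {m : M} (hm : m ≠ 0) :
    Function.Injective fun s : k => algebraMap k R s • m := by
  intro s s' h
  by_contra hne
  apply hm
  have hsub : algebraMap k R (s - s') • m = 0 := by
    rw [map_sub, sub_smul]
    exact sub_eq_zero.mpr h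
  rw [← one_smul R m, ← map_one (algebraMap k R), ← inv_mul_cancel₀ (sub_ne_zero.mpr hne),
    map_mul, mul_smul, hsub, smul_zero]

theorem lift_smul_eq {t : k} {f : Bool → R} {u v : M}
    (hfu : ∀ b, f b • u = algebraMap k R t • u)
    (hfv : ∀ b, f b • v = algebraMap k R b.toNat • u + v) (w : FreeSemigroup Bool) :
    FreeSemigroup.lift f w • u = algebraMap k R (t ^ w.length) • u ∧
      FreeSemigroup.lift f w • v = algebraMap k R (aeval t (digitPoly w.toList)) • u + v := by
  induction w using FreeSemigroup.recOnMul with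
  | ih1 b => simp [hfu, hfv, FreeSemigroup.toList_of, digitPoly]
  | ih2 b w _ ihw =>
    rw [FreeSemigroup.lift_of_mul, mul_smul, mul_smul, ihw.1, ihw.2]
    constructor
    · rw [smul_algebraMap_smul_comm, hfu, ← mul_smul, ← map_mul, FreeSemigroup.length_mul,
        FreeSemigroup.length_of, pow_add, pow_one, mul_comm]
    · rw [smul_add, smul_algebraMap_smul_comm, hfu, hfv, ← mul_smul, ← map_mul, ← add_assoc,
        ← add_smul, ← map_add, FreeSemigroup.toList_of_mul]
      simp only [digitPoly, map_add, map_mul, aeval_X, map_natCast, mul_comm, add_comm]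

theorem NoSignedDigitRoot.injective_lift {t : k} (ht : NoSignedDigitRoot t) {f : Bool → R}
    {u v : M} (hu : u ≠ 0) (hfu : ∀ b, f b • u = algebraMap k R t • u)
    (hfv : ∀ b, f b • v = algebraMap k R b.toNat • u + v) :
    Function.Injective (FreeSemigroup.lift f) := by
  intro w₁ w₂ h
  obtain ⟨hu₁, hv₁⟩ := lift_smul_eq hfu hfv w₁
  obtain ⟨hu₂, hv₂⟩ := lift_smul_eq hfu hfv w₂
  have hlen : w₁.length = w₂.length := ht.pow_injective <|
    algebraMap_smul_left_injective (R := R) hu (by dsimp only; rw [← hu₁, ← hu₂, h])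
  refine FreeSemigroup.toList_injective <|
    ht.eq_of_aeval_digitPoly_eq (by simp only [FreeSemigroup.length_toList, hlen]) ?_
  exact algebraMap_smul_left_injective (R := R) hu (add_right_cancel (by rw [← hv₁, ← hv₂, h]))

end Action

section SimpleModule

open Module (End)

variable {R M : Type*} [Ring R] [AddCommGroup M] [Module R M] [IsSimpleModule R M]

theorem IsSimpleModule.exists_smul_eq_and_smul_eq_s3 {u v : M} (hu : u ≠ 0)
    (hv : v ∉ (End R M) ∙ u) (w₁ w₂ : M) : ∃ r : R, r • u = w₁ ∧ r • v = w₂ := by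
  classical
  let f : ((End R M) ∙ u) →ₗ[End R M] M :=
    (LinearMap.toSpanSingleton _ M w₁).comp
      (LinearEquiv.coord (End R M) M u hu : _ →ₗ[End R M] End R M)
  obtain ⟨g, hgf, hgv⟩ := LinearMap.exists_extend_of_notMem f hv w₂
  have hgu : g u = w₁ := by
    simpa [f, LinearEquiv.coord_self] using congr($hgf ⟨u, Submodule.mem_span_singleton_self u⟩)
  obtain ⟨r, hr⟩ := jacobson_density g {u, v}
  exact ⟨r, by rw [← hr u (by simp), hgu], by rw [← hr v (by simp), hgv]⟩

end SimpleModule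

theorem HasFreeNoncyclicSubsemigroup.of_surjective_s3 {S T : Type*} [Semigroup S] [Semigroup T]
    (φ : S →ₙ* T) (hφ : Function.Surjective φ) (h : HasFreeNoncyclicSubsemigroup T) :
    HasFreeNoncyclicSubsemigroup S := by
  obtain ⟨x, y, hinj⟩ := h
  obtain ⟨x', rfl⟩ := hφ x
  obtain ⟨y', rfl⟩ := hφ y
  have hcomp : φ.comp (FreeSemigroup.lift fun b : Bool => if b then x' else y') =
      FreeSemigroup.lift fun b : Bool => if b then φ x' else φ y' :=
    FreeSemigroup.hom_ext (funext fun b => by cases b <;> rfl)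
  refine ⟨x', y', Function.Injective.of_comp (f := φ) ?_⟩
  rwa [← MulHom.coe_comp, hcomp]

theorem InJacobsonRadical.eq_zero {D : Type u} [DivisionRing D] {r : D}
    (h : InJacobsonRadical r) : r = 0 := by
  simpa using h D inferInstance inferInstance inferInstance 1

theorem hasFreeNoncyclicSubsemigroup_of_surjective_divisionRing {k : Type v} [Field k]
    (hdiv : ∀ (D : Type u) (_ : DivisionRing D) (_ : Algebra k D),
      (¬ ∀ a b : D, a * b = b * a) → HasFreeNoncyclicSubsemigroup D)
    {R : Type*} [Ring R] [Algebra k R] {D : Type u} [DivisionRing D]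
    (φ : R →+* D) (hφ : Function.Surjective φ) (hD : ¬ ∀ a b : D, a * b = b * a) :
    HasFreeNoncyclicSubsemigroup R := by
  have hcentral : ∀ c d, φ.comp (algebraMap k R) c * d = d * φ.comp (algebraMap k R) c := by
    intro c d
    obtain ⟨r, rfl⟩ := hφ d
    simp only [RingHom.comp_apply, ← map_mul, Algebra.commutes]
  exact .of_surjective (φ : R →ₙ* D) hφ (hdiv D _ (RingHom.toAlgebra' _ hcentral) hD)

section

open Module (End)

variable {k : Type v} [Field k] {R M : Type u} [Ring R] [Algebra k R] [AddCommGroup M]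
  [Module R M] [IsSimpleModule R M]

theorem hasFreeNoncyclicSubsemigroup_of_forall_mem_span
    (hdiv : ∀ (D : Type u) (_ : DivisionRing D) (_ : Algebra k D),
      (¬ ∀ a b : D, a * b = b * a) → HasFreeNoncyclicSubsemigroup D)
    (hspan : ∀ u : M, u ≠ 0 → ∀ v, v ∈ (End R M) ∙ u) {x y : R} {m : M}
    (hm : (x * y - y * x) • m ≠ 0) : HasFreeNoncyclicSubsemigroup R := by
  classical
  have : Nontrivial M := IsSimpleModule.nontrivial R M
  have : IsSimpleModule (End R M) M := isSimpleModule_iff_toSpanSingleton_surjective.mpr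
    ⟨inferInstance, fun u hu v => Submodule.mem_span_singleton.mp (hspan u hu v)⟩
  obtain ⟨u, hu⟩ := exists_ne (0 : M)
  have : Module.Finite (End R M) M :=
    ⟨⟨{u}, eq_top_iff.mpr fun v _ => by simpa using hspan u hu v⟩⟩
  refine hasFreeNoncyclicSubsemigroup_of_surjective_divisionRing hdiv
    (Module.toModuleEnd (End R M) (S := R) M) Module.Finite.toModuleEnd_moduleEnd_surjective
    fun hcomm => hm ?_
  have := congr($(hcomm (Module.toModuleEnd (End R M) M x) (Module.toModuleEnd (End R M) M y)) m)
  simpa [sub_smul, mul_smul, sub_eq_zero] using this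

theorem hasFreeNoncyclicSubsemigroup_of_notMem_span {t : k} (ht : NoSignedDigitRoot t) {u v : M}
    (hu : u ≠ 0) (hv : v ∉ (End R M) ∙ u) : HasFreeNoncyclicSubsemigroup R := by
  obtain ⟨x, hxu, hxv⟩ :=
    IsSimpleModule.exists_smul_eq_and_smul_eq_s3 hu hv (algebraMap k R t • u) (u + v)
  obtain ⟨y, hyu, hyv⟩ :=
    IsSimpleModule.exists_smul_eq_and_smul_eq_s3 hu hv (algebraMap k R t • u) v
  refine ⟨x, y, ht.injective_lift (v := v) hu (fun b => ?_) (fun b => ?_)⟩ <;> cases b <;> simp [*]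

end

theorem hasFreeNoncyclicSubsemigroup_of_not_inJacobsonRadical {k : Type v} [Field k]
    (hk : NotAlgebraicOverFiniteSubfield k)
    (hdiv : ∀ (D : Type u) (_ : DivisionRing D) (_ : Algebra k D),
      (¬ ∀ a b : D, a * b = b * a) → HasFreeNoncyclicSubsemigroup D)
    {R : Type u} [Ring R] [Algebra k R] {x y : R} (h : ¬ InJacobsonRadical (x * y - y * x)) :
    HasFreeNoncyclicSubsemigroup R := by
  simp only [InJacobsonRadical, not_forall] at h
  obtain ⟨M, _, _, _, m, hm⟩ := h
  by_cases hspan : ∀ u : M, u ≠ 0 → ∀ v, v ∈ (Module.End R M) ∙ u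
  · exact hasFreeNoncyclicSubsemigroup_of_forall_mem_span hdiv hspan hm
  · push Not at hspan
    obtain ⟨u, hu, v, hv⟩ := hspan
    obtain ⟨t, ht⟩ := exists_noSignedDigitRoot hk
    exact hasFreeNoncyclicSubsemigroup_of_notMem_span (k := k) ht hu hv

/-- For a field `k` not algebraic over a finite subfield, the following are
equivalent: (i) every noncommutative division algebra over `k` contains a
free noncyclic subsemigroup; (ii) every `k`-algebra which is noncommutative
modulo its Jacobson radical contains a free noncyclic subsemigroup. -/
theorem free_subsemigroup_division_iff_noncomm_mod_jacobson
    {k : Type v} [Field k] (hk : NotAlgebraicOverFiniteSubfield k) :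
    (∀ (D : Type u) (_ : DivisionRing D) (_ : Algebra k D),
        (¬ ∀ a b : D, a * b = b * a) → HasFreeNoncyclicSubsemigroup D) ↔
    (∀ (R : Type u) (_ : Ring R) (_ : Algebra k R),
        (∃ x y : R, ¬ InJacobsonRadical (x * y - y * x)) →
          HasFreeNoncyclicSubsemigroup R) := by
  constructor
  · rintro hdiv R _ _ ⟨x, y, h⟩
    exact hasFreeNoncyclicSubsemigroup_of_not_inJacobsonRadical hk hdiv h
  · intro h D _ _ hD
    push Not at hD
    obtain ⟨a, b, hab⟩ := hD
    exact h D _ ‹_› ⟨a, b, fun hJ => hab (sub_eq_zero.mp hJ.eq_zero)⟩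
end

section
/- Let k be a field that is not algebraic over a finite subfield and let n be an integer with n ≥ 2. Then the general linear group GL_n(k) contains a free noncyclic subgroup, i.e., a subgroup that is free on two generators. -/
/-- A group `G` contains a free noncyclic subgroup if there are `x y : G`
such that the subgroup they generate is free on `{x, y}`, i.e. the canonical
group homomorphism from the free group on two generators sending the
generators to `x` and `y` is injective. -/
def HasFreeNoncyclicSubgroup (G : Type*) [Group G] : Prop :=
  ∃ x y : G, Function.Injective
    ⇑(FreeGroup.lift (fun b : Bool => if b then x else y))

/-!
A field that is not algebraic over a finite subfield contains `ℚ` or a rational function field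
`𝔽_p(t)`, and both carry a valuation `v` with an element `π`, `0 < v π < 1` (`2`, resp. `t`).
Acting on nonzero vectors of `K²`, the matrix `a = diag(π, 1)` plays ping-pong with the regions
`v s₀ < v s₁` and `v s₁ < v s₀`, while `c = !![1, 1; 1, 1 + π]` sends both regions into the
balanced vectors `v s₀ = v s₁`. Hence `a` and `c a c⁻¹` play ping-pong with the regions and their
`c`-translates and generate a free group. A block-diagonal embedding carries it into `GLₙ`.
-/

open Matrix Pointwise

theorem HasFreeNoncyclicSubgroup.of_injective {G H : Type*} [Group G] [Group H]
    (h : HasFreeNoncyclicSubgroup G) (f : G →* H) (hf : Function.Injective f) :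
    HasFreeNoncyclicSubgroup H := by
  obtain ⟨x, y, hxy⟩ := h
  refine ⟨f x, f y, ?_⟩
  have : FreeGroup.lift (fun b : Bool => if b then f x else f y) =
      f.comp (FreeGroup.lift fun b : Bool => if b then x else y) := by
    ext (_ | _) <;> simp
  rw [this]
  exact hf.comp hxy

def Matrix.fromBlocksOneMonoidHom (m o R : Type*) [Fintype m] [Fintype o] [DecidableEq m]
    [DecidableEq o] [Semiring R] : Matrix m m R →* Matrix (m ⊕ o) (m ⊕ o) R where
  toFun A := fromBlocks A 0 0 1
  map_one' := fromBlocks_one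
  map_mul' A B := by simp [fromBlocks_multiply]

theorem Matrix.fromBlocksOneMonoidHom_injective (m o R : Type*) [Fintype m] [Fintype o]
    [DecidableEq m] [DecidableEq o] [Semiring R] :
    Function.Injective (fromBlocksOneMonoidHom m o R) :=
  fun _ _ h => (fromBlocks_inj.1 h).1

theorem HasFreeNoncyclicSubgroup.GL_of_ringHom {K L : Type*} [Field K] [Field L] {m n : ℕ}
    (h : HasFreeNoncyclicSubgroup (GL (Fin m) K)) (f : K →+* L) (hmn : m ≤ n) :
    HasFreeNoncyclicSubgroup (GL (Fin n) L) := by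
  let e : Fin m ⊕ Fin (n - m) ≃ Fin n := finSumFinEquiv.trans (finCongr (by omega))
  let φ : Matrix (Fin m) (Fin m) K →* Matrix (Fin n) (Fin n) L :=
    (reindexRingEquiv L e).toMonoidHom.comp
      ((fromBlocksOneMonoidHom _ _ L).comp f.mapMatrix.toMonoidHom)
  have hφ : Function.Injective φ := (reindexRingEquiv L e).injective.comp
    ((fromBlocksOneMonoidHom_injective _ _ L).comp (Matrix.map_injective f.injective))
  exact h.of_injective (Units.map φ) (Units.map_injective hφ)

/-- `FreeGroup.injective_lift_of_ping_pong` asks `G` to live in the universe of the index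
type `Bool`. -/
theorem FreeGroup.injective_lift_conj_of_ping_pong {G : Type} {α : Type*} [Group G]
    [MulAction G α] {a c : G} {X Y : Set α} (hX : X.Nonempty) (hXY : Disjoint X Y)
    (ha : a • Yᶜ ⊆ X) (hc : Disjoint (c • (X ∪ Y)) (X ∪ Y)) :
    Function.Injective (FreeGroup.lift fun b : Bool => if b then a else c * a * c⁻¹) := by
  have ha' : a⁻¹ • Xᶜ ⊆ Y := by
    rwa [Set.smul_set_subset_iff_subset_inv_smul_set, inv_inv, Set.compl_subset_comm,
      ← Set.smul_set_compl]
  have hcX : c • X ⊆ c • (X ∪ Y) := Set.smul_set_mono Set.subset_union_left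
  have hcY : c • Y ⊆ c • (X ∪ Y) := Set.smul_set_mono Set.subset_union_right
  refine FreeGroup.injective_lift_of_ping_pong _ (fun b => cond b X (c • X))
    (fun b => cond b Y (c • Y)) (by simp [hX]) ?_ ?_ ?_ ?_ ?_
  · exact pairwise_disjoint_on_bool.2 (hc.symm.mono Set.subset_union_left hcX)
  · exact pairwise_disjoint_on_bool.2 (hc.symm.mono Set.subset_union_right hcY)
  · rintro (_ | _) (_ | _)
    · exact Set.disjoint_smul_set.2 hXY
    · exact hc.mono hcX Set.subset_union_right
    · exact hc.symm.mono Set.subset_union_left hcY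
    · exact hXY
  · rintro (_ | _)
    · simpa [← Set.smul_set_compl, smul_smul] using Set.smul_set_mono (a := c) ha
    · simpa using ha
  · rintro (_ | _)
    · simpa [← Set.smul_set_compl, smul_smul, mul_assoc] using Set.smul_set_mono (a := c) ha'
    · simpa using ha'

namespace Valuation

variable {K Γ₀ : Type*} [Field K] [LinearOrderedCommGroupWithZero Γ₀] (v : Valuation K Γ₀)
  {π x y : K}

theorem map_mul_lt_of_le (hπ : v π < 1) (hxy : v x ≤ v y) (hy : y ≠ 0) : v (π * x) < v y :=
  calc v (π * x) = v π * v x := v.map_mul π x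
    _ ≤ v π * v y := by gcongr
    _ < 1 * v y := mul_lt_mul_of_pos_right hπ (v.pos_iff.2 hy)
    _ = v y := one_mul _

theorem map_add_eq_map_add_one_add_mul (hπ : v π < 1) (hxy : v x ≠ v y) :
    v (x + y) = v (x + (1 + π) * y) := by
  have hy : v ((1 + π) * y) = v y := by rw [v.map_mul, v.map_one_add_of_lt hπ, one_mul]
  rcases hxy.lt_or_gt with hlt | hlt
  · rw [v.map_add_eq_of_lt_right hlt, v.map_add_eq_of_lt_right (hy ▸ hlt), hy]
  · rw [v.map_add_eq_of_lt_left hlt, v.map_add_eq_of_lt_left (hy ▸ hlt)]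

end Valuation

theorem hasFreeNoncyclicSubgroup_GL_two_of_valuation {K : Type} {Γ₀ : Type*} [Field K]
    [LinearOrderedCommGroupWithZero Γ₀] (v : Valuation K Γ₀) {π : K} (hπ0 : π ≠ 0)
    (hπ1 : v π < 1) : HasFreeNoncyclicSubgroup (GL (Fin 2) K) := by
  let a := GeneralLinearGroup.mkOfDetNeZero !![π, 0; 0, 1] (by simpa)
  let c := GeneralLinearGroup.mkOfDetNeZero !![1, 1; 1, 1 + π] (by simpa [det_fin_two])
  let X : Set {s : Fin 2 → K // s ≠ 0} := {s | v (s.1 0) < v (s.1 1)}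
  let Y : Set {s : Fin 2 → K // s ≠ 0} := {s | v (s.1 1) < v (s.1 0)}
  have hXY : X ∪ Y = {s | v (s.1 0) ≠ v (s.1 1)} := Set.ext fun _ => lt_or_lt_iff_ne
  refine ⟨a, c * a * c⁻¹, FreeGroup.injective_lift_conj_of_ping_pong (X := X) (Y := Y)
    ⟨⟨![0, 1], by simp⟩, by simp [X]⟩ ?_ ?_ ?_⟩
  · exact Set.disjoint_left.2 fun _ hX hY => lt_asymm hX hY
  · rintro _ ⟨s, hs, rfl⟩
    have hs1 : s.1 1 ≠ 0 := fun h1 => s.2 <| by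
      have h0 : s.1 0 = 0 := by simpa [Y, h1] using hs
      ext i; fin_cases i <;> simp [h0, h1]
    simpa [a, X] using v.map_mul_lt_of_le hπ1 (not_lt.1 hs) hs1
  · rw [hXY, Set.disjoint_left]
    rintro _ ⟨s, hs, rfl⟩ hcs
    exact hcs (by simpa [c] using v.map_add_eq_map_add_one_add_mul hπ1 hs)

theorem hasFreeNoncyclicSubgroup_GL_two_rat : HasFreeNoncyclicSubgroup (GL (Fin 2) ℚ) :=
  hasFreeNoncyclicSubgroup_GL_two_of_valuation (Rat.padicValuation 2) (π := (2 : ℕ))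
    (by norm_num)
    (by rw [Rat.padicValuation_self, ← WithZero.exp_zero, WithZero.exp_lt_exp]; norm_num)

theorem hasFreeNoncyclicSubgroup_GL_two_ratFunc (F : Type) [Field F] :
    HasFreeNoncyclicSubgroup (GL (Fin 2) (RatFunc F)) :=
  hasFreeNoncyclicSubgroup_GL_two_of_valuation ((Polynomial.idealX F).valuation (RatFunc F))
    RatFunc.X_ne_zero
    (by rw [Polynomial.valuation_X_eq_neg_one, ← WithZero.exp_zero, WithZero.exp_lt_exp]; norm_num)

theorem NotAlgebraicOverFiniteSubfield.exists_transcendental {k : Type*} [Field k]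
    (hk : NotAlgebraicOverFiniteSubfield k) (F : Type*) [Field F] [Finite F] [Algebra F k] :
    ∃ t : k, Transcendental F t := by
  by_contra! h
  refine hk ⟨(algebraMap F k).fieldRange, (Set.finite_range (algebraMap F k)).to_subtype,
    fun x => ?_⟩
  exact (not_not.1 (h x)).ringHom_of_comp_eq (algebraMap F k).rangeRestrictField (RingHom.id k)
    (algebraMap F k).rangeRestrictField.injective rfl

/-- If `k` is a field not algebraic over a finite subfield and `n ≥ 2`, then
`GL_n(k)` contains a free noncyclic subgroup. -/
theorem gl_has_free_subgroup
    {k : Type*} [Field k] (hk : NotAlgebraicOverFiniteSubfield k)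
    (n : ℕ) (hn : 2 ≤ n) :
    HasFreeNoncyclicSubgroup (GL (Fin n) k) := by
  obtain _ | ⟨p, _, _⟩ := CharP.exists' k
  · exact hasFreeNoncyclicSubgroup_GL_two_rat.GL_of_ringHom (Rat.castHom k) hn
  · let := ZMod.algebra k p
    obtain ⟨t, ht⟩ := hk.exists_transcendental (ZMod p)
    let f : RatFunc (ZMod p) →+* k :=
      (IntermediateField.val _).toRingHom.comp (RatFunc.algEquivOfTranscendental t ht).toRingHom
    exact (hasFreeNoncyclicSubgroup_GL_two_ratFunc (ZMod p)).GL_of_ringHom f hn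
end
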